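/- Let F be a smooth solution of the associativity (WDVV-type) equations on ℝⁿ, let λ ∈ ℝ, and let χ be a smooth solution of the Gauss–Manin equations with parameter λ, i.e. ∂_α∂_γ χ = λ η^{ρν} ∂_α∂_γ∂_ρ F ∂_ν χ for all α,γ. Then G = χ is a symmetry characteristic of the associativity equations at F, i.e. it satisfies their linearization. -/

import Mathlib

/-- Partial derivative of `f` in the `i`-th coordinate direction on `ℝⁿ`. -/
noncomputable def pd {n : ℕ} (i : Fin n) (f : (Fin n → ℝ) → ℝ) : (Fin n → ℝ) → ℝ :=
  fun x => fderiv ℝ f x (Pi.single i 1)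

set_option maxHeartbeats 4000000


lemma pd_contDiff {n : ℕ} {f : (Fin n → ℝ) → ℝ} (hf : ContDiff ℝ (⊤ : ℕ∞) f) (i : Fin n) :
    ContDiff ℝ (⊤ : ℕ∞) (pd i f) := by
  have h1 : ContDiff ℝ (⊤ : ℕ∞) (fderiv ℝ f) := hf.fderiv_right (by simp)
  exact (ContinuousLinearMap.apply ℝ ℝ (Pi.single i 1 : Fin n → ℝ)).contDiff.comp h1

lemma pd_comm {n : ℕ} {f : (Fin n → ℝ) → ℝ} (hf : ContDiff ℝ (⊤ : ℕ∞) f) (i j : Fin n)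
    (x : Fin n → ℝ) : pd i (pd j f) x = pd j (pd i f) x := by
  have hsymm : IsSymmSndFDerivAt ℝ f x := hf.contDiffAt.isSymmSndFDerivAt (by
    rw [minSmoothness_of_isRCLikeNormedField]; exact WithTop.coe_le_coe.mpr (le_top : (2 : ℕ∞) ≤ ⊤))
  have h1 : ContDiff ℝ (⊤ : ℕ∞) (fderiv ℝ f) := hf.fderiv_right (by simp)
  have key : ∀ k l : Fin n, pd k (pd l f) x
      = fderiv ℝ (fderiv ℝ f) x (Pi.single k 1) (Pi.single l 1) := by
    intro k l
    have : pd l f = fun y => (fderiv ℝ f y) ((fun _ => (Pi.single l 1 : Fin n → ℝ)) y) := rfl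
    rw [pd, this, fderiv_clm_apply (h1.differentiable (by simp) x) (differentiableAt_const _)]
    simp
  rw [key i j, key j i, hsymm (Pi.single i 1) (Pi.single j 1)]

lemma pd_mul {n : ℕ} {f g : (Fin n → ℝ) → ℝ} {x : Fin n → ℝ}
    (hf : DifferentiableAt ℝ f x) (hg : DifferentiableAt ℝ g x) (i : Fin n) :
    pd i (fun y => f y * g y) x = pd i f x * g x + f x * pd i g x := by
  rw [pd, fderiv_fun_mul hf hg]
  simp only [ContinuousLinearMap.add_apply, ContinuousLinearMap.smul_apply, smul_eq_mul, pd]; ring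

lemma pd_const_mul {n : ℕ} {f : (Fin n → ℝ) → ℝ} {x : Fin n → ℝ}
    (hf : DifferentiableAt ℝ f x) (c : ℝ) (i : Fin n) :
    pd i (fun y => c * f y) x = c * pd i f x := by
  rw [pd, fderiv_const_mul hf]; simp [pd]

lemma pd_sum {n : ℕ} {ι : Type*} {s : Finset ι} {f : ι → (Fin n → ℝ) → ℝ} {x : Fin n → ℝ}
    (h : ∀ j ∈ s, DifferentiableAt ℝ (f j) x) (i : Fin n) :
    pd i (fun y => ∑ j ∈ s, f j y) x = ∑ j ∈ s, pd i (f j) x := by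
  rw [pd, fderiv_fun_sum h]; simp [pd]

lemma pd_congr {n : ℕ} {f g : (Fin n → ℝ) → ℝ} (h : ∀ y, f y = g y) (i : Fin n)
    (x : Fin n → ℝ) : pd i f x = pd i g x := by
  have : f = g := funext h
  rw [this]

lemma pd_cmul2 {n : ℕ} {A B : (Fin n → ℝ) → ℝ} {x : Fin n → ℝ}
    (hA : DifferentiableAt ℝ A x) (hB : DifferentiableAt ℝ B x) (c : ℝ) (i : Fin n) :
    pd i (fun y => c * A y * B y) x = c * (pd i A x * B x + A x * pd i B x) := by
  have h1 : pd i (fun y => (c * A y) * B y) x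
      = pd i (fun y => c * A y) x * B x + (c * A x) * pd i B x :=
    pd_mul (hA.const_mul c) hB i
  rw [show (fun y => c * A y * B y) = fun y => (c * A y) * B y from rfl, h1,
    pd_const_mul hA c i]
  ring

lemma pd_mul3 {n : ℕ} {A B : (Fin n → ℝ) → ℝ} {x : Fin n → ℝ}
    (hA : DifferentiableAt ℝ A x) (hB : DifferentiableAt ℝ B x) (c : ℝ) (i : Fin n) :
    pd i (fun y => A y * c * B y) x = pd i A x * c * B x + A x * c * pd i B x := by
  have h0 : (fun y => A y * c * B y) = fun y => c * A y * B y := by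
    funext y; ring
  rw [h0, pd_cmul2 hA hB c i]; ring

section Main
variable {n : ℕ} (η : Matrix (Fin n) (Fin n) ℝ) (F χ : (Fin n → ℝ) → ℝ) (lam : ℝ)

lemma gm_third
    (hF : ContDiff ℝ (⊤ : ℕ∞) F) (hχ : ContDiff ℝ (⊤ : ℕ∞) χ)
    (hGM : ∀ α γ, ∀ x : Fin n → ℝ,
      pd α (pd γ χ) x
        = lam * ∑ ρ, ∑ ν, η ρ ν * pd α (pd γ (pd ρ F)) x * pd ν χ x)
    (a b c : Fin n) (x : Fin n → ℝ) :
    pd a (pd b (pd c χ)) x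
      = lam * ∑ p, ∑ q, η p q * (pd a (pd b (pd c (pd p F))) x * pd q χ x
          + pd b (pd c (pd p F)) x
            * (lam * ∑ s, ∑ m, η s m * pd a (pd q (pd s F)) x * pd m χ x)) := by
  have hD3 : ∀ u v w : Fin n, Differentiable ℝ (pd u (pd v (pd w F))) :=
    fun u v w => (pd_contDiff (pd_contDiff (pd_contDiff hF w) v) u).differentiable (by simp)
  have hDχ : ∀ q : Fin n, Differentiable ℝ (pd q χ) :=
    fun q => (pd_contDiff hχ q).differentiable (by simp)
  have hsummand : ∀ p q : Fin n, DifferentiableAt ℝ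
      (fun y => η p q * pd b (pd c (pd p F)) y * pd q χ y) x :=
    fun p q => (((hD3 b c p).differentiableAt.const_mul (η p q)).mul (hDχ q).differentiableAt)
  have hinner : ∀ p : Fin n, DifferentiableAt ℝ
      (fun y => ∑ q, η p q * pd b (pd c (pd p F)) y * pd q χ y) x :=
    fun p => DifferentiableAt.fun_sum (fun q _ => hsummand p q)
  have houter : DifferentiableAt ℝ
      (fun y => ∑ p, ∑ q, η p q * pd b (pd c (pd p F)) y * pd q χ y) x :=
    DifferentiableAt.fun_sum (fun p _ => hinner p)
  calc pd a (pd b (pd c χ)) x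
      = pd a (fun y => lam * ∑ p, ∑ q, η p q * pd b (pd c (pd p F)) y * pd q χ y) x :=
        pd_congr (hGM b c) a x
    _ = lam * pd a (fun y => ∑ p, ∑ q, η p q * pd b (pd c (pd p F)) y * pd q χ y) x :=
        pd_const_mul houter lam a
    _ = lam * ∑ p, pd a (fun y => ∑ q, η p q * pd b (pd c (pd p F)) y * pd q χ y) x := by
        rw [pd_sum (fun p _ => hinner p) a]
    _ = lam * ∑ p, ∑ q, pd a (fun y => η p q * pd b (pd c (pd p F)) y * pd q χ y) x := by
        congr 1
        exact Finset.sum_congr rfl fun p _ => pd_sum (fun q _ => hsummand p q) a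
    _ = lam * ∑ p, ∑ q, η p q * (pd a (pd b (pd c (pd p F))) x * pd q χ x
          + pd b (pd c (pd p F)) x
            * (lam * ∑ s, ∑ m, η s m * pd a (pd q (pd s F)) x * pd m χ x)) := by
        congr 1
        refine Finset.sum_congr rfl fun p _ => Finset.sum_congr rfl fun q _ => ?_
        rw [pd_cmul2 (hD3 b c p).differentiableAt (hDχ q).differentiableAt (η p q) a,
          ← hGM a q x]

end Main

section Sym
variable {n : ℕ} {F : (Fin n → ℝ) → ℝ}

lemma swap23 (hF : ContDiff ℝ (⊤ : ℕ∞) F) (a b c : Fin n) :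
    pd a (pd b (pd c F)) = pd a (pd c (pd b F)) := by
  have : pd b (pd c F) = pd c (pd b F) := funext (pd_comm hF b c)
  rw [this]

lemma swap12 (hF : ContDiff ℝ (⊤ : ℕ∞) F) (a b c : Fin n) :
    pd a (pd b (pd c F)) = pd b (pd a (pd c F)) :=
  funext (pd_comm (pd_contDiff hF c) a b)

lemma rot3 (hF : ContDiff ℝ (⊤ : ℕ∞) F) (a b c : Fin n) :
    pd a (pd b (pd c F)) = pd b (pd c (pd a F)) := by
  rw [swap12 hF, swap23 hF]

lemma s4_front (hF : ContDiff ℝ (⊤ : ℕ∞) F) (p a b c : Fin n) :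
    pd a (pd b (pd c (pd p F))) = pd p (pd a (pd b (pd c F))) := by
  have h1 : pd c (pd p F) = pd p (pd c F) := funext (pd_comm hF c p)
  have h2 : pd b (pd p (pd c F)) = pd p (pd b (pd c F)) :=
    funext (pd_comm (pd_contDiff hF c) b p)
  have h3 : pd a (pd p (pd b (pd c F))) = pd p (pd a (pd b (pd c F))) :=
    funext (pd_comm (pd_contDiff (pd_contDiff hF c) b) a p)
  rw [h1, h2, h3]

end Sym

section Main2
variable {n : ℕ} (η : Matrix (Fin n) (Fin n) ℝ) (F : (Fin n → ℝ) → ℝ)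

lemma wdvv_deriv (hF : ContDiff ℝ (⊤ : ℕ∞) F)
    (hWDVV : ∀ α β ν ρ, ∀ x : Fin n → ℝ,
      ∑ δ, ∑ γ, pd α (pd β (pd δ F)) x * η δ γ * pd γ (pd ν (pd ρ F)) x
        = ∑ δ, ∑ γ, pd α (pd ν (pd δ F)) x * η δ γ * pd γ (pd β (pd ρ F)) x)
    (a b c d p : Fin n) (x : Fin n → ℝ) :
    ∑ δ, ∑ γ, (pd p (pd a (pd b (pd δ F))) x * η δ γ * pd γ (pd c (pd d F)) x
        + pd a (pd b (pd δ F)) x * η δ γ * pd p (pd γ (pd c (pd d F))) x)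
      = ∑ δ, ∑ γ, (pd p (pd a (pd c (pd δ F))) x * η δ γ * pd γ (pd b (pd d F)) x
        + pd a (pd c (pd δ F)) x * η δ γ * pd p (pd γ (pd b (pd d F))) x) := by
  have hD3 : ∀ u v w : Fin n, Differentiable ℝ (pd u (pd v (pd w F))) :=
    fun u v w => (pd_contDiff (pd_contDiff (pd_contDiff hF w) v) u).differentiable (by simp)
  have key : ∀ a b c d : Fin n,
      pd p (fun y => ∑ δ, ∑ γ, pd a (pd b (pd δ F)) y * η δ γ * pd γ (pd c (pd d F)) y) x
        = ∑ δ, ∑ γ, (pd p (pd a (pd b (pd δ F))) x * η δ γ * pd γ (pd c (pd d F)) x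
            + pd a (pd b (pd δ F)) x * η δ γ * pd p (pd γ (pd c (pd d F))) x) := by
    intro a b c d
    have hsummand : ∀ δ γ : Fin n, DifferentiableAt ℝ
        (fun y => pd a (pd b (pd δ F)) y * η δ γ * pd γ (pd c (pd d F)) y) x :=
      fun δ γ => ((hD3 a b δ x).mul_const (η δ γ)).mul (hD3 γ c d x)
    have hinner : ∀ δ : Fin n, DifferentiableAt ℝ
        (fun y => ∑ γ, pd a (pd b (pd δ F)) y * η δ γ * pd γ (pd c (pd d F)) y) x :=
      fun δ => DifferentiableAt.fun_sum (fun γ _ => hsummand δ γ)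
    rw [pd_sum (fun δ _ => hinner δ) p]
    refine Finset.sum_congr rfl fun δ _ => ?_
    rw [pd_sum (fun γ _ => hsummand δ γ) p]
    refine Finset.sum_congr rfl fun γ _ => ?_
    exact pd_mul3 (hD3 a b δ x) (hD3 γ c d x) (η δ γ) p
  rw [← key a b c d, ← key a c b d]
  exact pd_congr (hWDVV a b c d) p x

end Main2

section Rot
variable {M : Type*} [AddCommMonoid M] {ι : Type*} [Fintype ι]

lemma scongr {f g : ι → M} (h : ∀ i, f i = g i) : ∑ i, f i = ∑ i, g i :=
  Finset.sum_congr rfl fun i _ => h i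

lemma rotA2 (f : ι → ι → M) : ∑ i, ∑ j, f i j = ∑ j, ∑ i, f i j := Finset.sum_comm

lemma rotA3 (f : ι → ι → ι → M) :
    ∑ i, ∑ j, ∑ k, f i j k = ∑ k, ∑ i, ∑ j, f i j k := by
  calc ∑ i, ∑ j, ∑ k, f i j k = ∑ i, ∑ k, ∑ j, f i j k := scongr fun i => rotA2 _
    _ = ∑ k, ∑ i, ∑ j, f i j k := rotA2 _

lemma rotA4 (f : ι → ι → ι → ι → M) :
    ∑ i, ∑ j, ∑ k, ∑ l, f i j k l = ∑ l, ∑ i, ∑ j, ∑ k, f i j k l := by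
  calc ∑ i, ∑ j, ∑ k, ∑ l, f i j k l = ∑ i, ∑ l, ∑ j, ∑ k, f i j k l :=
      scongr fun i => rotA3 _
    _ = ∑ l, ∑ i, ∑ j, ∑ k, f i j k l := rotA2 _

lemma rotA5 (f : ι → ι → ι → ι → ι → M) :
    ∑ i, ∑ j, ∑ k, ∑ l, ∑ u, f i j k l u = ∑ u, ∑ i, ∑ j, ∑ k, ∑ l, f i j k l u := by
  calc ∑ i, ∑ j, ∑ k, ∑ l, ∑ u, f i j k l u = ∑ i, ∑ u, ∑ j, ∑ k, ∑ l, f i j k l u :=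
      scongr fun i => rotA4 _
    _ = ∑ u, ∑ i, ∑ j, ∑ k, ∑ l, f i j k l u := rotA2 _

lemma rotA6 (f : ι → ι → ι → ι → ι → ι → M) :
    ∑ i, ∑ j, ∑ k, ∑ l, ∑ u, ∑ v, f i j k l u v
      = ∑ v, ∑ i, ∑ j, ∑ k, ∑ l, ∑ u, f i j k l u v := by
  calc ∑ i, ∑ j, ∑ k, ∑ l, ∑ u, ∑ v, f i j k l u v
      = ∑ i, ∑ v, ∑ j, ∑ k, ∑ l, ∑ u, f i j k l u v := scongr fun i => rotA5 _
    _ = ∑ v, ∑ i, ∑ j, ∑ k, ∑ l, ∑ u, f i j k l u v := rotA2 _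

end Rot

noncomputable def Mmat {n : ℕ} (η : Matrix (Fin n) (Fin n) ℝ) (F : (Fin n → ℝ) → ℝ)
    (x : Fin n → ℝ) (a : Fin n) : Matrix (Fin n) (Fin n) ℝ :=
  Matrix.of fun p q => ∑ d, pd a (pd p (pd d F)) x * η d q

section MC
variable {n : ℕ} (η : Matrix (Fin n) (Fin n) ℝ) (F : (Fin n → ℝ) → ℝ)

lemma Mmat_comm (hF : ContDiff ℝ (⊤ : ℕ∞) F)
    (hWDVV : ∀ α β ν ρ, ∀ x : Fin n → ℝ,
      ∑ δ, ∑ γ, pd α (pd β (pd δ F)) x * η δ γ * pd γ (pd ν (pd ρ F)) x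
        = ∑ δ, ∑ γ, pd α (pd ν (pd δ F)) x * η δ γ * pd γ (pd β (pd ρ F)) x)
    (x : Fin n → ℝ) (a b : Fin n) :
    Mmat η F x a * Mmat η F x b = Mmat η F x b * Mmat η F x a := by
  ext p q
  have expand : ∀ u v : Fin n,
      (Mmat η F x u * Mmat η F x v) p q
        = ∑ e, (∑ d, ∑ c, pd u (pd p (pd d F)) x * η d c * pd c (pd v (pd e F)) x) * η e q := by
    intro u v
    rw [Matrix.mul_apply]
    simp only [Mmat, Matrix.of_apply]
    calc ∑ c, (∑ d, pd u (pd p (pd d F)) x * η d c) * (∑ e, pd v (pd c (pd e F)) x * η e q)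
        = ∑ c, ∑ e, ∑ d, (pd u (pd p (pd d F)) x * η d c) * (pd v (pd c (pd e F)) x * η e q) := by
          simp only [Finset.sum_mul, Finset.mul_sum]
      _ = ∑ e, ∑ c, ∑ d, (pd u (pd p (pd d F)) x * η d c) * (pd v (pd c (pd e F)) x * η e q) :=
          rotA2 _
      _ = ∑ e, ∑ d, ∑ c, (pd u (pd p (pd d F)) x * η d c) * (pd v (pd c (pd e F)) x * η e q) :=
          scongr fun e => rotA2 _
      _ = ∑ e, (∑ d, ∑ c, pd u (pd p (pd d F)) x * η d c * pd c (pd v (pd e F)) x) * η e q := by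
          refine scongr fun e => ?_
          rw [Finset.sum_mul]
          refine scongr fun d => ?_
          rw [Finset.sum_mul]
          refine scongr fun c => ?_
          rw [swap12 hF v c e]
          ring
  rw [expand a b, expand b a]
  refine scongr fun e => ?_
  congr 1
  calc ∑ d, ∑ c, pd a (pd p (pd d F)) x * η d c * pd c (pd b (pd e F)) x
      = ∑ d, ∑ c, pd a (pd b (pd d F)) x * η d c * pd c (pd p (pd e F)) x := hWDVV a p b e x
    _ = ∑ d, ∑ c, pd b (pd a (pd d F)) x * η d c * pd c (pd p (pd e F)) x := by
        refine scongr fun d => scongr fun c => ?_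
        rw [swap12 hF a b d]
    _ = ∑ d, ∑ c, pd b (pd p (pd d F)) x * η d c * pd c (pd a (pd e F)) x :=
        (hWDVV b p a e x).symm

end MC

section G
variable {n : ℕ} (η : Matrix (Fin n) (Fin n) ℝ) (F χ : (Fin n → ℝ) → ℝ) (lam : ℝ)

set_option maxHeartbeats 4000000 in
lemma G1 (hF : ContDiff ℝ (⊤ : ℕ∞) F) (hχ : ContDiff ℝ (⊤ : ℕ∞) χ)
    (hηsymm : ∀ α β, η α β = η β α)
    (hGM : ∀ α γ, ∀ x : Fin n → ℝ,
      pd α (pd γ χ) x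
        = lam * ∑ ρ, ∑ ν, η ρ ν * pd α (pd γ (pd ρ F)) x * pd ν χ x)
    (a b c d : Fin n) (x : Fin n → ℝ) :
    ∑ δ, ∑ γ, pd a (pd b (pd δ χ)) x * η δ γ * pd γ (pd c (pd d F)) x
      = lam * ∑ p, ∑ q, η p q * (pd q χ x
          * ∑ δ, ∑ γ, pd p (pd a (pd b (pd δ F))) x * η δ γ * pd γ (pd c (pd d F)) x)
        + lam ^ 2 * ∑ m, (Mmat η F x c * Mmat η F x b * Mmat η F x a) d m * pd m χ x := by
  have step1 : ∑ δ, ∑ γ, pd a (pd b (pd δ χ)) x * η δ γ * pd γ (pd c (pd d F)) x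
      = ∑ δ, ∑ γ, (lam * ∑ p, ∑ q, η p q * (pd a (pd b (pd δ (pd p F))) x * pd q χ x
          + pd b (pd δ (pd p F)) x
            * (lam * ∑ s, ∑ m, η s m * pd a (pd q (pd s F)) x * pd m χ x)))
          * η δ γ * pd γ (pd c (pd d F)) x :=
    scongr fun δ => scongr fun γ => by rw [gm_third η F χ lam hF hχ hGM a b δ x]
  rw [step1]
  simp only [Finset.mul_sum, Finset.sum_mul, mul_add, add_mul, Finset.sum_add_distrib,
    Matrix.mul_apply, Mmat, Matrix.of_apply]
  congr 1
  · refine ((rotA4 _).trans ((rotA4 _).trans ?_))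
    refine scongr fun p => scongr fun q => scongr fun δ => scongr fun γ => ?_
    rw [s4_front hF p a b δ]
    ring
  · refine (rotA6 _).trans ?_
    refine (scongr fun m => (rotA5 _).trans ((rotA5 _).trans
      (scongr fun q => scongr fun s => scongr fun δ => rotA2 _))).trans ?_
    refine scongr fun m => scongr fun q => scongr fun s => scongr fun δ =>
      scongr fun p => scongr fun γ => ?_
    rw [rot3 hF γ c d, hηsymm δ γ]
    ring

end G

lemma mulr2 {ι : Type*} [Fintype ι] (C : ℝ) (g : ι → ι → ℝ) :
    (∑ i, ∑ j, g i j) * C = ∑ i, ∑ j, g i j * C := by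
  rw [Finset.sum_mul]
  exact scongr fun i => by rw [Finset.sum_mul]

section G2
variable {n : ℕ} (η : Matrix (Fin n) (Fin n) ℝ) (F χ : (Fin n → ℝ) → ℝ) (lam : ℝ)

set_option maxHeartbeats 4000000 in
lemma G2 (hF : ContDiff ℝ (⊤ : ℕ∞) F) (hχ : ContDiff ℝ (⊤ : ℕ∞) χ)
    (hηsymm : ∀ α β, η α β = η β α)
    (hGM : ∀ α γ, ∀ x : Fin n → ℝ,
      pd α (pd γ χ) x
        = lam * ∑ ρ, ∑ ν, η ρ ν * pd α (pd γ (pd ρ F)) x * pd ν χ x)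
    (hWDVV : ∀ α β ν ρ, ∀ x : Fin n → ℝ,
      ∑ δ, ∑ γ, pd α (pd β (pd δ F)) x * η δ γ * pd γ (pd ν (pd ρ F)) x
        = ∑ δ, ∑ γ, pd α (pd ν (pd δ F)) x * η δ γ * pd γ (pd β (pd ρ F)) x)
    (a b c d : Fin n) (x : Fin n → ℝ) :
    ∑ δ, ∑ γ, pd a (pd b (pd δ F)) x * η δ γ * pd γ (pd c (pd d χ)) x
      = lam * ∑ p, ∑ q, η p q * (pd q χ x
          * ∑ δ, ∑ γ, pd a (pd b (pd δ F)) x * η δ γ * pd p (pd γ (pd c (pd d F))) x)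
        + lam ^ 2 * ∑ m, (Mmat η F x c * Mmat η F x a * Mmat η F x b) d m * pd m χ x := by
  have step1 : ∑ δ, ∑ γ, pd a (pd b (pd δ F)) x * η δ γ * pd γ (pd c (pd d χ)) x
      = ∑ δ, ∑ γ, pd a (pd b (pd δ F)) x * η δ γ
          * (lam * ∑ p, ∑ q, η p q * (pd γ (pd c (pd d (pd p F))) x * pd q χ x
              + pd c (pd d (pd p F)) x
                * (lam * ∑ s, ∑ m, η s m * pd γ (pd q (pd s F)) x * pd m χ x))) :=
    scongr fun δ => scongr fun γ => by rw [gm_third η F χ lam hF hχ hGM γ c d x]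
  rw [step1]
  simp only [Finset.mul_sum, Finset.sum_mul, mul_add, add_mul, Finset.sum_add_distrib,
    Matrix.mul_apply, Mmat, Matrix.of_apply]
  congr 1
  · refine ((rotA4 _).trans ((rotA4 _).trans ?_))
    refine scongr fun p => scongr fun q => scongr fun δ => scongr fun γ => ?_
    rw [s4_front hF p γ c d]
    ring
  · have hkey : ∀ p q s m : Fin n,
        (∑ δ, ∑ γ, pd a (pd b (pd δ F)) x * η δ γ *
            (lam * (η p q * (pd c (pd d (pd p F)) x *
              (lam * (η s m * pd γ (pd q (pd s F)) x * pd m χ x))))))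
          = ∑ δ, ∑ γ, pd a (pd q (pd δ F)) x * η δ γ * pd γ (pd b (pd s F)) x
              * (lam ^ 2 * (η p q * (pd c (pd d (pd p F)) x * (η s m * pd m χ x)))) := by
      intro p q s m
      calc (∑ δ, ∑ γ, pd a (pd b (pd δ F)) x * η δ γ *
            (lam * (η p q * (pd c (pd d (pd p F)) x *
              (lam * (η s m * pd γ (pd q (pd s F)) x * pd m χ x))))))
          = ∑ δ, ∑ γ, (pd a (pd b (pd δ F)) x * η δ γ * pd γ (pd q (pd s F)) x)
              * (lam ^ 2 * (η p q * (pd c (pd d (pd p F)) x * (η s m * pd m χ x)))) :=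
            scongr fun δ => scongr fun γ => by ring
        _ = (∑ δ, ∑ γ, pd a (pd b (pd δ F)) x * η δ γ * pd γ (pd q (pd s F)) x)
              * (lam ^ 2 * (η p q * (pd c (pd d (pd p F)) x * (η s m * pd m χ x)))) :=
            (mulr2 _ _).symm
        _ = (∑ δ, ∑ γ, pd a (pd q (pd δ F)) x * η δ γ * pd γ (pd b (pd s F)) x)
              * (lam ^ 2 * (η p q * (pd c (pd d (pd p F)) x * (η s m * pd m χ x)))) := by
            rw [hWDVV a b q s x]
        _ = ∑ δ, ∑ γ, pd a (pd q (pd δ F)) x * η δ γ * pd γ (pd b (pd s F)) x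
              * (lam ^ 2 * (η p q * (pd c (pd d (pd p F)) x * (η s m * pd m χ x)))) :=
            mulr2 _ _
    refine ((rotA6 _).trans ((rotA6 _).trans ((rotA6 _).trans ((rotA6 _).trans
      ((scongr fun p => scongr fun q => scongr fun s => scongr fun m =>
        hkey p q s m).trans ?_)))))
    refine (rotA4 _).trans ?_
    refine (scongr fun m => (rotA5 _).trans (scongr fun γ => (rotA3 _).trans
      (scongr fun s => (rotA3 _).trans (rotA3 _)))).trans ?_
    refine scongr fun m => scongr fun γ => scongr fun s => scongr fun q =>
      scongr fun δ => scongr fun p => ?_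
    rw [swap12 hF γ b s]
    ring

end G2

lemma sum2_add {ι : Type*} [Fintype ι] (f g : ι → ι → ℝ) :
    (∑ i, ∑ j, f i j) + (∑ i, ∑ j, g i j) = ∑ i, ∑ j, (f i j + g i j) := by
  rw [← Finset.sum_add_distrib]
  exact scongr fun i => by rw [← Finset.sum_add_distrib]

/-- a solution `χ` of the Gauss–Manin equations is a symmetry
characteristic of the associativity (WDVV-type) equations. -/
theorem gauss_manin_solution_is_symmetry_of_wdvv
    {n : ℕ} (hn : 1 ≤ n)
    (η : Matrix (Fin n) (Fin n) ℝ)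
    (hηsymm : ∀ α β, η α β = η β α)
    (hηinv : IsUnit η.det)
    (F χ : (Fin n → ℝ) → ℝ) (lam : ℝ)
    (hF : ContDiff ℝ (⊤ : ℕ∞) F)
    (hχ : ContDiff ℝ (⊤ : ℕ∞) χ)
    (hWDVV : ∀ α β ν ρ, ∀ x : Fin n → ℝ,
      ∑ δ, ∑ γ, pd α (pd β (pd δ F)) x * η δ γ * pd γ (pd ν (pd ρ F)) x
        = ∑ δ, ∑ γ, pd α (pd ν (pd δ F)) x * η δ γ * pd γ (pd β (pd ρ F)) x)
    (hGM : ∀ α γ, ∀ x : Fin n → ℝ,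
      pd α (pd γ χ) x
        = lam * ∑ ρ, ∑ ν, η ρ ν * pd α (pd γ (pd ρ F)) x * pd ν χ x) :
    ∀ α β ν ρ, ∀ x : Fin n → ℝ,
      (∑ δ, ∑ γ, pd α (pd β (pd δ χ)) x * η δ γ * pd γ (pd ν (pd ρ F)) x)
        + (∑ δ, ∑ γ, pd α (pd β (pd δ F)) x * η δ γ * pd γ (pd ν (pd ρ χ)) x)
      = (∑ δ, ∑ γ, pd α (pd ν (pd δ χ)) x * η δ γ * pd γ (pd β (pd ρ F)) x)
        + (∑ δ, ∑ γ, pd α (pd ν (pd δ F)) x * η δ γ * pd γ (pd β (pd ρ χ)) x) := by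
  intro α β ν ρ x
  -- bracket identity for the lam-linear parts
  have hBr : ∀ b c : Fin n, ∀ p : Fin n,
      (∑ δ, ∑ γ, pd p (pd α (pd b (pd δ F))) x * η δ γ * pd γ (pd c (pd ρ F)) x)
        + (∑ δ, ∑ γ, pd α (pd b (pd δ F)) x * η δ γ * pd p (pd γ (pd c (pd ρ F))) x)
      = (∑ δ, ∑ γ, pd p (pd α (pd c (pd δ F))) x * η δ γ * pd γ (pd b (pd ρ F)) x)
        + (∑ δ, ∑ γ, pd α (pd c (pd δ F)) x * η δ γ * pd p (pd γ (pd b (pd ρ F))) x) := by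
    intro b c p
    exact (sum2_add _ _).trans ((wdvv_deriv η F hF hWDVV α b c ρ p x).trans (sum2_add _ _).symm)
  have hlin : ∀ b c : Fin n,
      lam * (∑ p, ∑ q, η p q * (pd q χ x
          * ∑ δ, ∑ γ, pd p (pd α (pd b (pd δ F))) x * η δ γ * pd γ (pd c (pd ρ F)) x))
        + lam * (∑ p, ∑ q, η p q * (pd q χ x
          * ∑ δ, ∑ γ, pd α (pd b (pd δ F)) x * η δ γ * pd p (pd γ (pd c (pd ρ F))) x))
      = lam * ((∑ p, ∑ q, η p q * (pd q χ x
          * ∑ δ, ∑ γ, pd p (pd α (pd b (pd δ F))) x * η δ γ * pd γ (pd c (pd ρ F)) x))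
        + (∑ p, ∑ q, η p q * (pd q χ x
          * ∑ δ, ∑ γ, pd α (pd b (pd δ F)) x * η δ γ * pd p (pd γ (pd c (pd ρ F))) x))) := by
    intro b c; ring
  have hlinmain :
      lam * (∑ p, ∑ q, η p q * (pd q χ x
          * ∑ δ, ∑ γ, pd p (pd α (pd β (pd δ F))) x * η δ γ * pd γ (pd ν (pd ρ F)) x))
        + lam * (∑ p, ∑ q, η p q * (pd q χ x
          * ∑ δ, ∑ γ, pd α (pd β (pd δ F)) x * η δ γ * pd p (pd γ (pd ν (pd ρ F))) x))
      = lam * (∑ p, ∑ q, η p q * (pd q χ x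
          * ∑ δ, ∑ γ, pd p (pd α (pd ν (pd δ F))) x * η δ γ * pd γ (pd β (pd ρ F)) x))
        + lam * (∑ p, ∑ q, η p q * (pd q χ x
          * ∑ δ, ∑ γ, pd α (pd ν (pd δ F)) x * η δ γ * pd p (pd γ (pd β (pd ρ F))) x)) := by
    rw [hlin β ν, hlin ν β, sum2_add, sum2_add]
    refine congrArg (lam * ·) (scongr fun p => scongr fun q => ?_)
    have h := hBr β ν p
    calc η p q * (pd q χ x * ∑ δ, ∑ γ, pd p (pd α (pd β (pd δ F))) x * η δ γ * pd γ (pd ν (pd ρ F)) x)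
          + η p q * (pd q χ x * ∑ δ, ∑ γ, pd α (pd β (pd δ F)) x * η δ γ * pd p (pd γ (pd ν (pd ρ F))) x)
        = η p q * (pd q χ x * ((∑ δ, ∑ γ, pd p (pd α (pd β (pd δ F))) x * η δ γ * pd γ (pd ν (pd ρ F)) x)
            + (∑ δ, ∑ γ, pd α (pd β (pd δ F)) x * η δ γ * pd p (pd γ (pd ν (pd ρ F))) x))) := by ring
      _ = η p q * (pd q χ x * ((∑ δ, ∑ γ, pd p (pd α (pd ν (pd δ F))) x * η δ γ * pd γ (pd β (pd ρ F)) x)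
            + (∑ δ, ∑ γ, pd α (pd ν (pd δ F)) x * η δ γ * pd p (pd γ (pd β (pd ρ F))) x))) := by rw [h]
      _ = η p q * (pd q χ x * ∑ δ, ∑ γ, pd p (pd α (pd ν (pd δ F))) x * η δ γ * pd γ (pd β (pd ρ F)) x)
          + η p q * (pd q χ x * ∑ δ, ∑ γ, pd α (pd ν (pd δ F)) x * η δ γ * pd p (pd γ (pd β (pd ρ F))) x) := by ring
  -- matrix commutation for the lam² parts
  have hMc := Mmat_comm η F hF hWDVV x
  have c1 : Mmat η F x ν * Mmat η F x β * Mmat η F x α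
      = Mmat η F x β * Mmat η F x ν * Mmat η F x α := by rw [hMc ν β]
  have c2 : Mmat η F x ν * Mmat η F x α * Mmat η F x β
      = Mmat η F x β * Mmat η F x α * Mmat η F x ν := by
    rw [hMc ν α, mul_assoc, hMc ν β, ← mul_assoc, hMc α β]
  rw [G1 η F χ lam hF hχ hηsymm hGM α β ν ρ x,
    G2 η F χ lam hF hχ hηsymm hGM hWDVV α β ν ρ x,
    G1 η F χ lam hF hχ hηsymm hGM α ν β ρ x,
    G2 η F χ lam hF hχ hηsymm hGM hWDVV α ν β ρ x,
    c1, c2]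
  linarith [hlinmain]
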